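/- If ℓ, m, n are all odd (ℓ, n ≥ 1, m ≥ 3), then the great shadow S(θ(ℓ, m, n)) contains a subdivision of K_{3,3} as a subgraph. -/

import Mathlib

universe u w

section Defs

variable {V : Type u} {W : Type w}

/-- The great shadow `S(G)` of a graph `G`: on vertex set `V × Bool`, the copies `(v, false)`
form `G` itself, and each shadow vertex `(v, true)` is adjacent to `(v, false)` and to
`(u, false)` for every neighbor `u` of `v` in `G`; no two shadow vertices are adjacent. -/
def greatShadow (G : SimpleGraph V) : SimpleGraph (V × Bool) where
  Adj x y := x ≠ y ∧ ¬(x.2 = true ∧ y.2 = true) ∧ (x.1 = y.1 ∨ G.Adj x.1 y.1)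
  symm := by
    constructor
    rintro x y ⟨h1, h2, h3⟩
    exact ⟨h1.symm, fun h => h2 ⟨h.2, h.1⟩, h3.imp Eq.symm SimpleGraph.Adj.symm⟩
  loopless := ⟨fun x h => h.1 rfl⟩

/-- The interior (internal vertices) of a walk: its support without its two endpoints. -/
def SimpleGraph.Walk.interior {G : SimpleGraph V} {u v : V} (p : G.Walk u v) : List V :=
  p.support.tail.dropLast

/-- `ContainsSubdivision K G` means that `G` contains a subdivision of `K` as a subgraph:
there is an injective placement of the branch vertices of `K` in `G` together with
internally disjoint paths in `G` realizing the edges of `K`. -/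
def ContainsSubdivision (K : SimpleGraph V) (G : SimpleGraph W) : Prop :=
  ∃ f : V → W, Function.Injective f ∧
    ∃ P : ∀ u v, K.Adj u v → G.Walk (f u) (f v),
      (∀ u v (h : K.Adj u v), (P u v h).IsPath) ∧
      (∀ u v (h : K.Adj u v), P v u h.symm = (P u v h).reverse) ∧
      (∀ u v (h : K.Adj u v), ∀ x ∈ (P u v h).interior, x ∉ Set.range f) ∧
      (∀ u v a b (h : K.Adj u v) (h' : K.Adj a b), s(u, v) ≠ s(a, b) →
        ∀ x ∈ (P u v h).interior, x ∉ (P a b h').interior)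

/-- `H.IsSubdivisionOf K` : `H` is (isomorphic to) a subdivision of `K`, i.e. `H` contains a
subdivision of `K` whose branch vertices and paths exhaust all vertices and edges of `H`. -/
def IsSubdivisionOf (H : SimpleGraph W) (K : SimpleGraph V) : Prop :=
  ∃ f : V → W, Function.Injective f ∧
    ∃ P : ∀ u v, K.Adj u v → H.Walk (f u) (f v),
      (∀ u v (h : K.Adj u v), (P u v h).IsPath) ∧
      (∀ u v (h : K.Adj u v), P v u h.symm = (P u v h).reverse) ∧
      (∀ u v (h : K.Adj u v), ∀ x ∈ (P u v h).interior, x ∉ Set.range f) ∧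
      (∀ u v a b (h : K.Adj u v) (h' : K.Adj a b), s(u, v) ≠ s(a, b) →
        ∀ x ∈ (P u v h).interior, x ∉ (P a b h').interior) ∧
      (∀ e ∈ H.edgeSet, ∃ u v, ∃ h : K.Adj u v, e ∈ (P u v h).edges) ∧
      (∀ x : W, x ∈ Set.range f ∨ ∃ u v, ∃ h : K.Adj u v, x ∈ (P u v h).support)

/-- The diamond graph `K₄⁻`: the complete graph on four vertices minus one edge. -/
def diamondGraph : SimpleGraph (Fin 4) :=
  (SimpleGraph.completeGraph (Fin 4)).deleteEdges {s((0 : Fin 4), (1 : Fin 4))}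

/-- The cycle graph `Cₙ` on `ZMod n` (for `n ≥ 3`). -/
def cycleG (n : ℕ) : SimpleGraph (ZMod n) :=
  SimpleGraph.fromRel (fun u v => u - v = 1)

/-- The square of the cycle graph `Cₙ`: vertices at cycle-distance at most 2 are adjacent. -/
def cycleSq (n : ℕ) : SimpleGraph (ZMod n) :=
  SimpleGraph.fromRel (fun u v => u - v = 1 ∨ u - v = 2)

/-- The theta graph `θ(ℓ, m, n)` on `ℓ + m + n` vertices, obtained by joining the endvertices
of paths `P_ℓ` and `P_n` to the endvertices of a path `P_m`. -/
def thetaGraph (l m n : ℕ) : SimpleGraph (Fin l ⊕ Fin m ⊕ Fin n) :=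
  SimpleGraph.fromRel (fun x y =>
    match x, y with
    | Sum.inl a, Sum.inl b => (a : ℕ) + 1 = (b : ℕ)
    | Sum.inr (Sum.inl a), Sum.inr (Sum.inl b) => (a : ℕ) + 1 = (b : ℕ)
    | Sum.inr (Sum.inr a), Sum.inr (Sum.inr b) => (a : ℕ) + 1 = (b : ℕ)
    | Sum.inr (Sum.inl a), Sum.inl b =>
        ((a : ℕ) = 0 ∧ (b : ℕ) = 0) ∨ ((a : ℕ) = m - 1 ∧ (b : ℕ) = l - 1)
    | Sum.inr (Sum.inl a), Sum.inr (Sum.inr b) =>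
        ((a : ℕ) = 0 ∧ (b : ℕ) = 0) ∨ ((a : ℕ) = m - 1 ∧ (b : ℕ) = n - 1)
    | _, _ => False)

/-- A plane embedding (drawing) of a graph `G`: an injective placement of the vertices in the
plane together with simple arcs for the edges, such that arcs pass through no vertices other
than their endpoints, and two arcs realizing distinct edges meet only in common endpoints. -/
structure PlaneEmbedding (G : SimpleGraph V) where
  vtx : V → ℝ × ℝ
  vtx_inj : Function.Injective vtx
  arc : ∀ ⦃u v : V⦄, G.Adj u v → Path (vtx u) (vtx v)
  arc_inj : ∀ ⦃u v : V⦄ (h : G.Adj u v), Function.Injective (arc h)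
  arc_symm : ∀ ⦃u v : V⦄ (h : G.Adj u v), arc h.symm = (arc h).symm
  arc_vtx : ∀ ⦃u v : V⦄ (h : G.Adj u v) (w : V), vtx w ∈ Set.range (arc h) → w = u ∨ w = v
  arc_meet : ∀ ⦃u v a b : V⦄ (h : G.Adj u v) (h' : G.Adj a b), s(u, v) ≠ s(a, b) →
    Set.range (arc h) ∩ Set.range (arc h') ⊆ ({vtx u, vtx v} : Set (ℝ × ℝ)) ∩ {vtx a, vtx b}

/-- A graph is planar if it admits a plane embedding. -/
def IsPlanar (G : SimpleGraph V) : Prop := Nonempty (PlaneEmbedding G)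

/-- The drawing of a plane embedding: the union of all vertex points and edge arcs. -/
def PlaneEmbedding.drawing {G : SimpleGraph V} (E : PlaneEmbedding G) : Set (ℝ × ℝ) :=
  Set.range E.vtx ∪ ⋃ (u) (v) (h : G.Adj u v), Set.range (E.arc h)

/-- The edge `uv` lies on the boundary of the outer (unbounded) face of the embedding `E`. -/
def PlaneEmbedding.OnOuterFace {G : SimpleGraph V} (E : PlaneEmbedding G)
    {u v : V} (h : G.Adj u v) : Prop :=
  ∃ p : ℝ × ℝ, p ∉ E.drawing ∧
    ¬Bornology.IsBounded (connectedComponentIn E.drawingᶜ p) ∧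
    Set.range (E.arc h) ⊆ closure (connectedComponentIn E.drawingᶜ p)

/-- No two distinct cycles of `G` share an edge: any two cycles having a common edge have the
same edge set. -/
def NoTwoCyclesShareEdge (G : SimpleGraph V) : Prop :=
  ∀ ⦃u v : V⦄ (c : G.Walk u u) (d : G.Walk v v), c.IsCycle → d.IsCycle →
    (∃ e, e ∈ c.edges ∧ e ∈ d.edges) → ∀ e, e ∈ c.edges ↔ e ∈ d.edges

/-- A cactus graph: a connected graph in which no two cycles share an edge. -/
def IsCactus (G : SimpleGraph V) : Prop := G.Connected ∧ NoTwoCyclesShareEdge G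

/-- `G` has no odd cycle (for connected graphs this is equivalent to being bipartite). -/
def HasNoOddCycle (G : SimpleGraph V) : Prop :=
  ∀ ⦃v : V⦄ (c : G.Walk v v), c.IsCycle → ¬Odd c.length

end Defs

section Aux
variable {W : Type*} {G : SimpleGraph W}

lemma list_tail_dropLast_comm {α : Type*} (s : List α) : s.tail.dropLast = s.dropLast.tail := by
  cases s with
  | nil => rfl
  | cons a t =>
    cases t with
    | nil => rfl
    | cons b u => rfl

lemma mem_interior_reverse {u v : W} (p : G.Walk u v) (x : W) :
    x ∈ p.reverse.interior ↔ x ∈ p.interior := by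
  unfold SimpleGraph.Walk.interior
  rw [SimpleGraph.Walk.support_reverse]
  have h1 : p.support.reverse.tail = p.support.dropLast.reverse :=
    List.tail_reverse
  have h2 : p.support.dropLast.reverse.dropLast = p.support.dropLast.tail.reverse := by
    have h3 := List.tail_reverse (l := p.support.dropLast.reverse)
    rw [List.reverse_reverse] at h3
    rw [h3, List.reverse_reverse]
  rw [h1, h2, List.mem_reverse, list_tail_dropLast_comm]

/-- a descending chain walk -/
def chainWalk (G : SimpleGraph W) (g : ℕ → W) :
    ∀ k, (∀ i, i < k → G.Adj (g (i+1)) (g i)) → G.Walk (g k) (g 0)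
  | 0, _ => SimpleGraph.Walk.nil
  | (k+1), h => SimpleGraph.Walk.cons (h k (Nat.lt_succ_self k))
      (chainWalk G g k (fun i hi => h i (Nat.lt_succ_of_lt hi)))

lemma chainWalk_support (g : ℕ → W) (k : ℕ) (h : ∀ i, i < k → G.Adj (g (i+1)) (g i)) :
    (chainWalk G g k h).support = ((List.range (k+1)).reverse).map g := by
  induction k with
  | zero => rfl
  | succ k ih =>
    rw [chainWalk, SimpleGraph.Walk.support_cons, ih]
    rw [List.range_succ (n := k+1), List.reverse_append]
    rfl

lemma chainWalk_interior (g : ℕ → W) (k : ℕ) (h : ∀ i, i < k → G.Adj (g (i+1)) (g i)) (x : W) :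
    x ∈ (chainWalk G g k h).interior ↔ ∃ i, 1 ≤ i ∧ i < k ∧ g i = x := by
  unfold SimpleGraph.Walk.interior
  rw [chainWalk_support]
  rw [List.range_succ, List.reverse_append]
  simp only [List.reverse_cons, List.reverse_nil, List.nil_append, List.singleton_append,
    List.map_cons, List.tail_cons]
  rw [← List.map_dropLast]
  have hd : (List.range k).reverse.dropLast = (List.range k).tail.reverse := by
    have h3 := List.tail_reverse (l := (List.range k).reverse)
    rw [List.reverse_reverse] at h3
    rw [h3, List.reverse_reverse]
  rw [hd]
  simp only [List.mem_map, List.mem_reverse]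
  constructor
  · rintro ⟨i, hi, rfl⟩
    cases k with
    | zero => simp at hi
    | succ k =>
      rw [List.range_succ_eq_map, List.tail_cons, List.mem_map] at hi
      obtain ⟨j, hj, rfl⟩ := hi
      exact ⟨j+1, by omega, by simpa using List.mem_range.mp hj, rfl⟩
  · rintro ⟨i, h1, h2, rfl⟩
    refine ⟨i, ?_, rfl⟩
    cases k with
    | zero => omega
    | succ k =>
      rw [List.range_succ_eq_map, List.tail_cons, List.mem_map]
      exact ⟨i-1, List.mem_range.mpr (by omega), by omega⟩

lemma chainWalk_isPath (g : ℕ → W) (k : ℕ) (h : ∀ i, i < k → G.Adj (g (i+1)) (g i))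
    (hinj : ∀ i j, i ≤ k → j ≤ k → g i = g j → i = j) :
    (chainWalk G g k h).IsPath := by
  apply SimpleGraph.Walk.IsPath.mk'
  rw [chainWalk_support]
  apply List.Nodup.map_on
  · intro i hi j hj hij
    rw [List.mem_reverse, List.mem_range] at hi hj
    exact hinj i j (by omega) (by omega) hij
  · exact List.nodup_reverse.mpr List.nodup_range

lemma cbg_adj {u v : Fin 3 ⊕ Fin 3}
    (h : (completeBipartiteGraph (Fin 3) (Fin 3)).Adj u v) :
    (∃ a b, u = Sum.inl a ∧ v = Sum.inr b) ∨ (∃ a b, u = Sum.inr a ∧ v = Sum.inl b) := by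
  rcases u with a | a <;> rcases v with b | b <;> simp_all [completeBipartiteGraph]

/-- Generic K33 builder. -/
def K33P (G : SimpleGraph W) (f : Fin 3 ⊕ Fin 3 → W)
    (P0 : ∀ i j : Fin 3, G.Walk (f (Sum.inl i)) (f (Sum.inr j))) :
    ∀ u v, (completeBipartiteGraph (Fin 3) (Fin 3)).Adj u v → G.Walk (f u) (f v)
  | Sum.inl i, Sum.inr j, _ => P0 i j
  | Sum.inr j, Sum.inl i, _ => (P0 i j).reverse
  | Sum.inl _, Sum.inl _, h => absurd h (by simp)
  | Sum.inr _, Sum.inr _, h => absurd h (by simp)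

lemma containsSubdivision_K33 (G : SimpleGraph W) (f : Fin 3 ⊕ Fin 3 → W)
    (hf : Function.Injective f)
    (P0 : ∀ i j : Fin 3, G.Walk (f (Sum.inl i)) (f (Sum.inr j)))
    (hpath : ∀ i j, (P0 i j).IsPath)
    (hrange : ∀ i j, ∀ x ∈ (P0 i j).interior, x ∉ Set.range f)
    (hdisj : ∀ i j i' j', (i, j) ≠ (i', j') →
      ∀ x ∈ (P0 i j).interior, x ∉ (P0 i' j').interior) :
    ContainsSubdivision (completeBipartiteGraph (Fin 3) (Fin 3)) G := by
  refine ⟨f, hf, K33P G f P0, ?_, ?_, ?_, ?_⟩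
  · rintro (i | i) (j | j) h
    · exact absurd h (by simp)
    · exact hpath i j
    · exact (hpath j i).reverse
    · exact absurd h (by simp)
  · rintro (i | i) (j | j) h
    · exact absurd h (by simp)
    · rfl
    · exact (SimpleGraph.Walk.reverse_reverse _).symm
    · exact absurd h (by simp)
  · rintro (i | i) (j | j) h x hx
    · exact absurd h (by simp)
    · exact hrange i j x hx
    · exact hrange j i x ((mem_interior_reverse _ x).mp hx)
    · exact absurd h (by simp)
  · intro u v c d h h' hne x hx
    rcases cbg_adj h with ⟨i, j, rfl, rfl⟩ | ⟨j, i, rfl, rfl⟩ <;>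
      rcases cbg_adj h' with ⟨a, b, rfl, rfl⟩ | ⟨b, a, rfl, rfl⟩
    · refine hdisj i j a b ?_ x hx
      rintro ⟨rfl, rfl⟩; exact hne rfl
    · rw [show K33P G f P0 (Sum.inr b) (Sum.inl a) h' = (P0 a b).reverse from rfl,
        mem_interior_reverse]
      refine hdisj i j a b ?_ x hx
      rintro ⟨rfl, rfl⟩
      exact hne (Sym2.eq_swap).symm
    · rw [show K33P G f P0 (Sum.inr j) (Sum.inl i) h = (P0 i j).reverse from rfl,
        mem_interior_reverse] at hx
      refine hdisj i j a b ?_ x hx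
      rintro ⟨rfl, rfl⟩
      exact hne Sym2.eq_swap
    · rw [show K33P G f P0 (Sum.inr j) (Sum.inl i) h = (P0 i j).reverse from rfl,
        mem_interior_reverse] at hx
      rw [show K33P G f P0 (Sum.inr b) (Sum.inl a) h' = (P0 a b).reverse from rfl,
        mem_interior_reverse]
      refine hdisj i j a b ?_ x hx
      rintro ⟨rfl, rfl⟩; exact hne rfl
end Aux

section Main
open SimpleGraph

variable {l m n : ℕ}

lemma gs_adj {V : Type*} {G : SimpleGraph V} {u v : V} {s t : Bool}
    (h1 : ¬(s = true ∧ t = true)) (h2 : G.Adj u v) : (greatShadow G).Adj (u, s) (v, t) :=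
  show (u, s) ≠ (v, t) ∧ ¬(s = true ∧ t = true) ∧ (u = v ∨ G.Adj u v) from ⟨fun he => h2.ne (congrArg Prod.fst he), h1, Or.inr h2⟩

/-- branch vertex placement -/
def tf (l m n : ℕ) (hl : 1 ≤ l) (hm : 3 ≤ m) (hn : 1 ≤ n) :
    Fin 3 ⊕ Fin 3 → (Fin l ⊕ Fin m ⊕ Fin n) × Bool
  | Sum.inl ⟨0, _⟩ => (Sum.inr (Sum.inl ⟨0, by omega⟩), false)
  | Sum.inl ⟨1, _⟩ => (Sum.inr (Sum.inl ⟨0, by omega⟩), true)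
  | Sum.inl ⟨_ + 2, _⟩ => (Sum.inr (Sum.inl ⟨m - 1, by omega⟩), false)
  | Sum.inr ⟨0, _⟩ => (Sum.inl ⟨0, by omega⟩, false)
  | Sum.inr ⟨1, _⟩ => (Sum.inr (Sum.inl ⟨1, by omega⟩), false)
  | Sum.inr ⟨_ + 2, _⟩ => (Sum.inr (Sum.inr ⟨0, by omega⟩), false)

lemma tf_inj (hl : 1 ≤ l) (hm : 3 ≤ m) (hn : 1 ≤ n) :
    Function.Injective (tf l m n hl hm hn) := by
  intro u v huv
  fin_cases u <;> fin_cases v <;>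
    first
      | rfl
      | (exfalso
         have h2 : (tf l m n hl hm hn _).1 = (tf l m n hl hm hn _).1 := congrArg Prod.fst huv
         have h3 : (tf l m n hl hm hn _).2 = (tf l m n hl hm hn _).2 := congrArg Prod.snd huv
         simp only [tf] at h2 h3
         first
           | exact absurd h3 (by decide)
           | (simp only [Sum.inl.injEq, Sum.inr.injEq, Fin.mk.injEq, reduceCtorEq] at h2
              all_goals omega))

def tgL (l m n : ℕ) (hm : 3 ≤ m) : ℕ → (Fin l ⊕ Fin m ⊕ Fin n) × Bool :=
  fun i => if h : i < l then (Sum.inl ⟨i, h⟩, false)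
    else (Sum.inr (Sum.inl ⟨m - 1, by omega⟩), false)

def tgN (l m n : ℕ) (hm : 3 ≤ m) : ℕ → (Fin l ⊕ Fin m ⊕ Fin n) × Bool :=
  fun i => if h : i < n then (Sum.inr (Sum.inr ⟨i, h⟩), false)
    else (Sum.inr (Sum.inl ⟨m - 1, by omega⟩), false)

def tgM (l m n : ℕ) (hm : 3 ≤ m) : ℕ → (Fin l ⊕ Fin m ⊕ Fin n) × Bool :=
  fun i => (Sum.inr (Sum.inl ⟨min (i + 1) (m - 1), by omega⟩), false)

lemma hadjL (hl : 1 ≤ l) (hm : 3 ≤ m) : ∀ i, i < l →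
    (greatShadow (thetaGraph l m n)).Adj (tgL l m n hm (i + 1)) (tgL l m n hm i) := by
  intro i hi
  unfold tgL
  rw [dif_pos hi]
  by_cases h1 : i + 1 < l
  · rw [dif_pos h1]
    exact gs_adj (by simp) ⟨by simp, Or.inr rfl⟩
  · rw [dif_neg h1]
    refine gs_adj (by simp) ⟨by simp, Or.inl (Or.inr ⟨rfl, ?_⟩)⟩
    show i = l - 1
    omega

lemma hadjN (hn : 1 ≤ n) (hm : 3 ≤ m) : ∀ i, i < n →
    (greatShadow (thetaGraph l m n)).Adj (tgN l m n hm (i + 1)) (tgN l m n hm i) := by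
  intro i hi
  unfold tgN
  rw [dif_pos hi]
  by_cases h1 : i + 1 < n
  · rw [dif_pos h1]
    exact gs_adj (by simp) ⟨by simp, Or.inr rfl⟩
  · rw [dif_neg h1]
    refine gs_adj (by simp) ⟨by simp, Or.inl (Or.inr ⟨rfl, ?_⟩)⟩
    show i = n - 1
    omega

lemma hadjM (hm : 3 ≤ m) : ∀ i, i < m - 2 →
    (greatShadow (thetaGraph l m n)).Adj (tgM l m n hm (i + 1)) (tgM l m n hm i) := by
  intro i hi
  unfold tgM
  refine gs_adj (by simp) ⟨?_, Or.inr ?_⟩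
  · simp only [ne_eq, Sum.inr.injEq, Sum.inl.injEq, Fin.mk.injEq]
    omega
  · show min (i + 1) (m - 1) + 1 = min (i + 1 + 1) (m - 1)
    omega

lemma pairr_eq {i j : ℕ} {hi : i < m} {hj : j < m} (h : i = j) :
    ((Sum.inr (Sum.inl ⟨i, hi⟩) : Fin l ⊕ Fin m ⊕ Fin n), false)
      = (Sum.inr (Sum.inl ⟨j, hj⟩), false) := by subst h; rfl

def tPL (l m n : ℕ) (hl : 1 ≤ l) (hm : 3 ≤ m) (hn : 1 ≤ n) :
    (greatShadow (thetaGraph l m n)).Walk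
      (tf l m n hl hm hn (Sum.inl 2)) (tf l m n hl hm hn (Sum.inr 0)) :=
  (chainWalk _ (tgL l m n hm) l (hadjL hl hm)).copy
    (by simp [tgL, tf]) (by simp only [tgL, dif_pos (by omega : 0 < l)]; rfl)

def tPM (l m n : ℕ) (hl : 1 ≤ l) (hm : 3 ≤ m) (hn : 1 ≤ n) :
    (greatShadow (thetaGraph l m n)).Walk
      (tf l m n hl hm hn (Sum.inl 2)) (tf l m n hl hm hn (Sum.inr 1)) :=
  (chainWalk _ (tgM l m n hm) (m - 2) (hadjM hm)).copy
    (by unfold tgM; exact pairr_eq (by omega))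
    (by unfold tgM; exact pairr_eq (by omega))

def tPN (l m n : ℕ) (hl : 1 ≤ l) (hm : 3 ≤ m) (hn : 1 ≤ n) :
    (greatShadow (thetaGraph l m n)).Walk
      (tf l m n hl hm hn (Sum.inl 2)) (tf l m n hl hm hn (Sum.inr 2)) :=
  (chainWalk _ (tgN l m n hm) n (hadjN hn hm)).copy
    (by simp [tgN, tf]) (by simp only [tgN, dif_pos (by omega : 0 < n)]; rfl)

lemma tadj_short (hl : 1 ≤ l) (hm : 3 ≤ m) (hn : 1 ≤ n) (i j : Fin 3) (hi : i ≠ 2) :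
    (greatShadow (thetaGraph l m n)).Adj
      (tf l m n hl hm hn (Sum.inl i)) (tf l m n hl hm hn (Sum.inr j)) := by
  have t0 : (thetaGraph l m n).Adj (Sum.inr (Sum.inl ⟨0, by omega⟩)) (Sum.inl ⟨0, by omega⟩) :=
    ⟨by simp, Or.inl (Or.inl ⟨rfl, rfl⟩)⟩
  have t1 : (thetaGraph l m n).Adj (Sum.inr (Sum.inl ⟨0, by omega⟩))
      (Sum.inr (Sum.inl ⟨1, by omega⟩)) := ⟨by simp, Or.inl rfl⟩
  have t2 : (thetaGraph l m n).Adj (Sum.inr (Sum.inl ⟨0, by omega⟩))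
      (Sum.inr (Sum.inr ⟨0, by omega⟩)) := ⟨by simp, Or.inl (Or.inl ⟨rfl, rfl⟩)⟩
  fin_cases i <;> fin_cases j
  · exact gs_adj (by simp) t0
  · exact gs_adj (by simp) t1
  · exact gs_adj (by simp) t2
  · exact gs_adj (by simp) t0
  · exact gs_adj (by simp) t1
  · exact gs_adj (by simp) t2
  all_goals exact absurd rfl hi

end Main

section Final
open SimpleGraph

variable {l m n : ℕ}

lemma interior_copy {W : Type*} {G : SimpleGraph W} {u v u' v' : W} (p : G.Walk u v)
    (hu : u = u') (hv : v = v') : (p.copy hu hv).interior = p.interior := by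
  unfold SimpleGraph.Walk.interior
  rw [SimpleGraph.Walk.support_copy]

lemma single_isPath {W : Type*} {G : SimpleGraph W} {u v : W} (h : G.Adj u v) :
    (SimpleGraph.Walk.cons h SimpleGraph.Walk.nil).IsPath := by
  apply SimpleGraph.Walk.IsPath.mk'
  simp [h.ne]

def tP0 (l m n : ℕ) (hl : 1 ≤ l) (hm : 3 ≤ m) (hn : 1 ≤ n) :
    ∀ i j : Fin 3, (greatShadow (thetaGraph l m n)).Walk
      (tf l m n hl hm hn (Sum.inl i)) (tf l m n hl hm hn (Sum.inr j))
  | ⟨2, _⟩, ⟨0, _⟩ => tPL l m n hl hm hn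
  | ⟨2, _⟩, ⟨1, _⟩ => tPM l m n hl hm hn
  | ⟨2, _⟩, ⟨2, _⟩ => tPN l m n hl hm hn
  | ⟨0, h⟩, j => SimpleGraph.Walk.cons
      (tadj_short hl hm hn ⟨0, h⟩ j (ne_of_beq_false rfl)) SimpleGraph.Walk.nil
  | ⟨1, h⟩, j => SimpleGraph.Walk.cons
      (tadj_short hl hm hn ⟨1, h⟩ j (ne_of_beq_false rfl)) SimpleGraph.Walk.nil

lemma tgL_inj (hl : 1 ≤ l) (hm : 3 ≤ m) : ∀ p q, p ≤ l → q ≤ l →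
    tgL l m n hm p = tgL l m n hm q → p = q := by
  intro p q hp hq hpq
  by_cases cp : p < l <;> by_cases cq : q < l
  · rw [tgL, tgL, dif_pos cp, dif_pos cq] at hpq
    simp only [Prod.mk.injEq, Sum.inl.injEq, Fin.mk.injEq, and_true] at hpq
    exact hpq
  · rw [tgL, tgL, dif_pos cp, dif_neg cq] at hpq
    exact absurd hpq (by simp)
  · rw [tgL, tgL, dif_neg cp, dif_pos cq] at hpq
    exact absurd hpq (by simp)
  · omega

lemma tgN_inj (hn : 1 ≤ n) (hm : 3 ≤ m) : ∀ p q, p ≤ n → q ≤ n →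
    tgN l m n hm p = tgN l m n hm q → p = q := by
  intro p q hp hq hpq
  by_cases cp : p < n <;> by_cases cq : q < n
  · rw [tgN, tgN, dif_pos cp, dif_pos cq] at hpq
    simp only [Prod.mk.injEq, Sum.inr.injEq, Fin.mk.injEq, and_true] at hpq
    exact hpq
  · rw [tgN, tgN, dif_pos cp, dif_neg cq] at hpq
    exact absurd hpq (by simp)
  · rw [tgN, tgN, dif_neg cp, dif_pos cq] at hpq
    exact absurd hpq (by simp)
  · omega

lemma tgM_inj (hm : 3 ≤ m) : ∀ p q, p ≤ m - 2 → q ≤ m - 2 →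
    tgM l m n hm p = tgM l m n hm q → p = q := by
  intro p q hp hq hpq
  simp only [tgM, Prod.mk.injEq, Sum.inr.injEq, Sum.inl.injEq, Fin.mk.injEq, and_true] at hpq
  omega

lemma mem_tPL (hl : 1 ≤ l) (hm : 3 ≤ m) (hn : 1 ≤ n) {x} (hx : x ∈ (tPL l m n hl hm hn).interior) :
    ∃ (i : ℕ) (h : i < l), 1 ≤ i ∧ x = ((Sum.inl ⟨i, h⟩ : Fin l ⊕ Fin m ⊕ Fin n), false) := by
  have e := interior_copy (chainWalk _ (tgL l m n hm) l (hadjL hl hm))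
    (u' := tf l m n hl hm hn (Sum.inl 2)) (v' := tf l m n hl hm hn (Sum.inr 0))
    (by simp [tgL, tf]) (by simp only [tgL, dif_pos (by omega : 0 < l)]; rfl)
  replace hx : x ∈ (chainWalk _ (tgL l m n hm) l (hadjL hl hm)).interior := by
    rw [← e]; exact hx
  rw [chainWalk_interior] at hx
  obtain ⟨i, h1, h2, rfl⟩ := hx
  refine ⟨i, h2, h1, ?_⟩
  show tgL l m n hm i = _
  rw [tgL, dif_pos h2]

lemma mem_tPN (hl : 1 ≤ l) (hm : 3 ≤ m) (hn : 1 ≤ n) {x} (hx : x ∈ (tPN l m n hl hm hn).interior) :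
    ∃ (i : ℕ) (h : i < n), 1 ≤ i ∧
      x = ((Sum.inr (Sum.inr ⟨i, h⟩) : Fin l ⊕ Fin m ⊕ Fin n), false) := by
  have e := interior_copy (chainWalk _ (tgN l m n hm) n (hadjN hn hm))
    (u' := tf l m n hl hm hn (Sum.inl 2)) (v' := tf l m n hl hm hn (Sum.inr 2))
    (by simp [tgN, tf]) (by simp only [tgN, dif_pos (by omega : 0 < n)]; rfl)
  replace hx : x ∈ (chainWalk _ (tgN l m n hm) n (hadjN hn hm)).interior := by
    rw [← e]; exact hx
  rw [chainWalk_interior] at hx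
  obtain ⟨i, h1, h2, rfl⟩ := hx
  refine ⟨i, h2, h1, ?_⟩
  show tgN l m n hm i = _
  rw [tgN, dif_pos h2]

lemma mem_tPM (hl : 1 ≤ l) (hm : 3 ≤ m) (hn : 1 ≤ n) {x} (hx : x ∈ (tPM l m n hl hm hn).interior) :
    ∃ (i : ℕ) (h : i < m), 2 ≤ i ∧ i ≤ m - 2 ∧
      x = ((Sum.inr (Sum.inl ⟨i, h⟩) : Fin l ⊕ Fin m ⊕ Fin n), false) := by
  unfold tPM at hx
  rw [interior_copy, chainWalk_interior] at hx
  obtain ⟨i, h1, h2, rfl⟩ := hx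
  exact ⟨min (i + 1) (m - 1), by omega, by omega, by omega, rfl⟩


set_option maxHeartbeats 1000000 in
/-- If `ℓ, m, n` are all odd (`ℓ, n ≥ 1`, `m ≥ 3`), then `S(θ(ℓ, m, n))`
contains a subdivision of `K₃,₃`. -/
theorem greatShadow_theta_odd_contains_TK33 (l m n : ℕ)
    (hl : 1 ≤ l) (hm : 3 ≤ m) (hn : 1 ≤ n)
    (ol : Odd l) (om : Odd m) (on' : Odd n) :
    ContainsSubdivision (completeBipartiteGraph (Fin 3) (Fin 3))
      (greatShadow (thetaGraph l m n)) := by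
  refine containsSubdivision_K33 _ (tf l m n hl hm hn) (tf_inj hl hm hn)
    (tP0 l m n hl hm hn) ?_ ?_ ?_
  · -- paths
    intro i j
    fin_cases i
    · exact single_isPath _
    · exact single_isPath _
    · fin_cases j
      · show ((chainWalk _ (tgL l m n hm) l (hadjL hl hm)).copy _ _).IsPath
        refine (SimpleGraph.Walk.isPath_copy _ _ _).mpr ?_
        exact chainWalk_isPath _ _ _ (tgL_inj hl hm)
      · show ((chainWalk _ (tgM l m n hm) (m - 2) (hadjM hm)).copy _ _).IsPath
        rw [SimpleGraph.Walk.isPath_copy]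
        exact chainWalk_isPath _ _ _ (tgM_inj hm)
      · show ((chainWalk _ (tgN l m n hm) n (hadjN hn hm)).copy _ _).IsPath
        refine (SimpleGraph.Walk.isPath_copy _ _ _).mpr ?_
        exact chainWalk_isPath _ _ _ (tgN_inj hn hm)
  · -- avoid range
    intro i j x hx
    rintro ⟨w, hw⟩
    fin_cases i
    · exact absurd hx List.not_mem_nil
    · exact absurd hx List.not_mem_nil
    · fin_cases j
      · obtain ⟨p, hp, hp1, rfl⟩ := mem_tPL hl hm hn hx
        fin_cases w <;>
          (simp only [tf, Prod.mk.injEq, Sum.inl.injEq, Sum.inr.injEq, Fin.mk.injEq,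
            reduceCtorEq, Bool.true_eq_false, Bool.false_eq_true, and_true, and_false,
            false_and, and_self] at hw) <;>
          omega
      · obtain ⟨p, hp, hp1, hp2, rfl⟩ := mem_tPM hl hm hn hx
        fin_cases w <;>
          (simp only [tf, Prod.mk.injEq, Sum.inl.injEq, Sum.inr.injEq, Fin.mk.injEq,
            reduceCtorEq, Bool.true_eq_false, Bool.false_eq_true, and_true, and_false,
            false_and, and_self] at hw) <;>
          omega
      · obtain ⟨p, hp, hp1, rfl⟩ := mem_tPN hl hm hn hx
        fin_cases w <;>
          (simp only [tf, Prod.mk.injEq, Sum.inl.injEq, Sum.inr.injEq, Fin.mk.injEq,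
            reduceCtorEq, Bool.true_eq_false, Bool.false_eq_true, and_true, and_false,
            false_and, and_self] at hw) <;>
          omega
  · -- disjoint interiors
    intro i j i' j' hne x hx hx'
    fin_cases i
    · exact absurd hx List.not_mem_nil
    · exact absurd hx List.not_mem_nil
    · fin_cases i'
      · exact absurd hx' List.not_mem_nil
      · exact absurd hx' List.not_mem_nil
      · fin_cases j <;> fin_cases j' <;>
          first
            | exact hne rfl
            | (obtain ⟨p, hp, hp1, rfl⟩ := mem_tPL hl hm hn hx
               obtain ⟨q, hq, hq1, hq2, heq⟩ := mem_tPM hl hm hn hx'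
               exact absurd heq (by simp))
            | (obtain ⟨p, hp, hp1, rfl⟩ := mem_tPL hl hm hn hx
               obtain ⟨q, hq, hq1, heq⟩ := mem_tPN hl hm hn hx'
               exact absurd heq (by simp))
            | (obtain ⟨p, hp, hp1, hp2, rfl⟩ := mem_tPM hl hm hn hx
               obtain ⟨q, hq, hq1, heq⟩ := mem_tPL hl hm hn hx'
               exact absurd heq (by simp))
            | (obtain ⟨p, hp, hp1, hp2, rfl⟩ := mem_tPM hl hm hn hx
               obtain ⟨q, hq, hq1, heq⟩ := mem_tPN hl hm hn hx'
               exact absurd heq (by simp))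
            | (obtain ⟨p, hp, hp1, rfl⟩ := mem_tPN hl hm hn hx
               obtain ⟨q, hq, hq1, heq⟩ := mem_tPL hl hm hn hx'
               exact absurd heq (by simp))
            | (obtain ⟨p, hp, hp1, rfl⟩ := mem_tPN hl hm hn hx
               obtain ⟨q, hq, hq1, hq2, heq⟩ := mem_tPM hl hm hn hx'
               exact absurd heq (by simp))
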